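/- Let A be a regular multiplier Hopf algebra, R a unitary left A-module algebra via ▷, and L ⊆ R a right ideal of R possessing an identity element 1_L. Then (L, ·, 𝔢) is a partial A-module algebra, where a·x = 1_L(a▷x) for a ∈ A, x ∈ L, and 𝔢(a) = a·1_L. Moreover, if L is a two-sided ideal of R, this induced partial action is symmetric. -/

import Mathlib

/- ## Preliminaries: multiplier algebras and (regular) multiplier Hopf algebras -/

open scoped TensorProduct
open TensorProduct LinearMap
set_option linter.unusedSectionVars false

noncomputable section

variable (k : Type*) [Field k]

section MultiplierAlgebra

variable (A : Type*) [NonUnitalRing A] [Module k A] [SMulCommClass k A A] [IsScalarTower k A A]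

/-- The product of an algebra is *nondegenerate*. -/
def NondegProd : Prop :=
  (∀ a : A, (∀ b : A, a * b = 0) → a = 0) ∧ ∀ b : A, (∀ a : A, a * b = 0) → b = 0

/-- A multiplier of `A`: a pair `(U, V)` of linear maps with `U (a*b) = U a * b`,
`V (a*b) = a * V b` and `V a * b = a * U b`. -/
@[ext] structure Multiplier where
  U : A →ₗ[k] A
  V : A →ₗ[k] A
  U_mul : ∀ a b : A, U (a * b) = U a * b
  V_mul : ∀ a b : A, V (a * b) = a * V b
  compat : ∀ a b : A, V a * b = a * U b

namespace Multiplier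

variable {k A}

instance : Zero (Multiplier k A) := ⟨⟨0, 0, by simp, by simp, by simp⟩⟩
instance : Add (Multiplier k A) :=
  ⟨fun m n => ⟨m.U + n.U, m.V + n.V,
    by simp [m.U_mul, n.U_mul, add_mul],
    by simp [m.V_mul, n.V_mul, mul_add],
    by simp [add_mul, mul_add, m.compat, n.compat]⟩⟩
instance : Neg (Multiplier k A) :=
  ⟨fun m => ⟨-m.U, -m.V, by simp [m.U_mul], by simp [m.V_mul],
    by simp [m.compat]⟩⟩
instance : SMul k (Multiplier k A) :=
  ⟨fun c m => ⟨c • m.U, c • m.V,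
    by simp [m.U_mul, smul_mul_assoc],
    by simp [m.V_mul, mul_smul_comm],
    by simp [smul_mul_assoc, mul_smul_comm, m.compat]⟩⟩

@[simp] lemma zero_U : (0 : Multiplier k A).U = 0 := rfl
@[simp] lemma zero_V : (0 : Multiplier k A).V = 0 := rfl
@[simp] lemma add_U (m n : Multiplier k A) : (m + n).U = m.U + n.U := rfl
@[simp] lemma add_V (m n : Multiplier k A) : (m + n).V = m.V + n.V := rfl
@[simp] lemma neg_U (m : Multiplier k A) : (-m).U = -m.U := rfl
@[simp] lemma neg_V (m : Multiplier k A) : (-m).V = -m.V := rfl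
@[simp] lemma smul_U (c : k) (m : Multiplier k A) : (c • m).U = c • m.U := rfl
@[simp] lemma smul_V (c : k) (m : Multiplier k A) : (c • m).V = c • m.V := rfl

instance : AddCommGroup (Multiplier k A) where
  add_assoc a b c := by ext x <;> simp [add_assoc]
  zero_add a := by ext x <;> simp
  add_zero a := by ext x <;> simp
  add_comm a b := by ext x <;> simp [add_comm]
  neg_add_cancel a := by ext x <;> simp
  nsmul := nsmulRec
  zsmul := zsmulRec

instance : Module k (Multiplier k A) where
  one_smul m := by ext x <;> simp
  mul_smul c d m := by ext x <;> simp [mul_smul]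
  smul_zero c := by ext x <;> simp
  smul_add c m n := by ext x <;> simp
  add_smul c d m := by ext x <;> simp [add_smul]
  zero_smul m := by ext x <;> simp

instance : One (Multiplier k A) := ⟨⟨LinearMap.id, LinearMap.id, by simp, by simp, by simp⟩⟩
instance : Mul (Multiplier k A) :=
  ⟨fun m n => ⟨m.U ∘ₗ n.U, n.V ∘ₗ m.V,
    by simp [n.U_mul, m.U_mul],
    by simp [m.V_mul, n.V_mul],
    by intro a b; simp only [LinearMap.comp_apply]; rw [n.compat, m.compat]⟩⟩

@[simp] lemma one_U : (1 : Multiplier k A).U = LinearMap.id := rfl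
@[simp] lemma one_V : (1 : Multiplier k A).V = LinearMap.id := rfl
@[simp] lemma mul_U (m n : Multiplier k A) : (m * n).U = m.U ∘ₗ n.U := rfl
@[simp] lemma mul_V (m n : Multiplier k A) : (m * n).V = n.V ∘ₗ m.V := rfl

instance : Monoid (Multiplier k A) where
  mul_assoc a b c := by ext x <;> simp
  one_mul a := by ext x <;> simp
  mul_one a := by ext x <;> simp

/-- The canonical map `A → M(A)` given by left and right multiplication. -/
def incl (a : A) : Multiplier k A :=
  ⟨LinearMap.mulLeft k a, LinearMap.mulRight k a,
    fun b c => by simp [mul_assoc], fun b c => by simp [mul_assoc],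
    fun b c => by simp [mul_assoc]⟩

@[simp] lemma incl_U (a b : A) : (incl (k := k) a).U b = a * b := rfl
@[simp] lemma incl_V (a b : A) : (incl (k := k) a).V b = b * a := rfl

/-- The canonical map `A → M(A)` as a linear map. -/
def inclL : A →ₗ[k] Multiplier k A where
  toFun := incl
  map_add' a b := by ext x <;> simp [add_mul, mul_add]
  map_smul' c a := by ext x <;> simp [smul_mul_assoc, mul_smul_comm]

@[simp] lemma inclL_apply (a : A) : (inclL (k := k) a) = incl a := rfl

/-- The `U`-component, as a linear map. -/
def Ulm : Multiplier k A →ₗ[k] A →ₗ[k] A where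
  toFun m := m.U
  map_add' _ _ := rfl
  map_smul' _ _ := rfl

/-- The `V`-component, as a linear map. -/
def Vlm : Multiplier k A →ₗ[k] A →ₗ[k] A where
  toFun m := m.V
  map_add' _ _ := rfl
  map_smul' _ _ := rfl

end Multiplier

end MultiplierAlgebra

section Tensor

variable (R : Type*) [NonUnitalRing R] [Module k R] [SMulCommClass k R R] [IsScalarTower k R R]
variable (A : Type*) [NonUnitalRing A] [Module k A] [SMulCommClass k A A] [IsScalarTower k A A]

/-- The multiplier `1 ⊗ a` of `R ⊗ A`. -/
def oneT (a : A) : Multiplier k (R ⊗[k] A) where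
  U := lTensor R (LinearMap.mulLeft k a)
  V := lTensor R (LinearMap.mulRight k a)
  U_mul u v := by
    induction u with
    | zero => simp
    | add u₁ u₂ h₁ h₂ => simp [add_mul, h₁, h₂]
    | tmul x b =>
      induction v with
      | zero => simp
      | add v₁ v₂ h₁ h₂ => simp [mul_add, h₁, h₂]
      | tmul y c => simp [Algebra.TensorProduct.tmul_mul_tmul, mul_assoc]
  V_mul u v := by
    induction u with
    | zero => simp
    | add u₁ u₂ h₁ h₂ => simp [add_mul, h₁, h₂]
    | tmul x b =>
      induction v with
      | zero => simp
      | add v₁ v₂ h₁ h₂ => simp [mul_add, h₁, h₂]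
      | tmul y c => simp [Algebra.TensorProduct.tmul_mul_tmul, mul_assoc]
  compat u v := by
    induction u with
    | zero => simp
    | add u₁ u₂ h₁ h₂ => simp [add_mul, h₁, h₂]
    | tmul x b =>
      induction v with
      | zero => simp
      | add v₁ v₂ h₁ h₂ => simp only [map_add, mul_add, h₁, h₂]
      | tmul y c => simp [Algebra.TensorProduct.tmul_mul_tmul, mul_assoc]

/-- The multiplier `x ⊗ 1` of `R ⊗ A`. -/
def tOne (x : R) : Multiplier k (R ⊗[k] A) where
  U := rTensor A (LinearMap.mulLeft k x)
  V := rTensor A (LinearMap.mulRight k x)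
  U_mul u v := by
    induction u with
    | zero => simp
    | add u₁ u₂ h₁ h₂ => simp [add_mul, h₁, h₂]
    | tmul y b =>
      induction v with
      | zero => simp
      | add v₁ v₂ h₁ h₂ => simp [mul_add, h₁, h₂]
      | tmul z c => simp [Algebra.TensorProduct.tmul_mul_tmul, mul_assoc]
  V_mul u v := by
    induction u with
    | zero => simp
    | add u₁ u₂ h₁ h₂ => simp [add_mul, h₁, h₂]
    | tmul y b =>
      induction v with
      | zero => simp
      | add v₁ v₂ h₁ h₂ => simp [mul_add, h₁, h₂]
      | tmul z c => simp [Algebra.TensorProduct.tmul_mul_tmul, mul_assoc]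
  compat u v := by
    induction u with
    | zero => simp
    | add u₁ u₂ h₁ h₂ => simp [add_mul, h₁, h₂]
    | tmul y b =>
      induction v with
      | zero => simp
      | add v₁ v₂ h₁ h₂ => simp only [map_add, mul_add, h₁, h₂]
      | tmul z c => simp [Algebra.TensorProduct.tmul_mul_tmul, mul_assoc]

/-- The multiplier `m ⊗ a` of `R ⊗ A`, for `m ∈ M(R)`, `a ∈ A`. -/
def mtensor (m : Multiplier k R) (a : A) : Multiplier k (R ⊗[k] A) where
  U := map m.U (LinearMap.mulLeft k a)
  V := map m.V (LinearMap.mulRight k a)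
  U_mul u v := by
    induction u with
    | zero => simp
    | add u₁ u₂ h₁ h₂ => simp [add_mul, h₁, h₂]
    | tmul y b =>
      induction v with
      | zero => simp
      | add v₁ v₂ h₁ h₂ => simp [mul_add, h₁, h₂]
      | tmul z c => simp [Algebra.TensorProduct.tmul_mul_tmul, mul_assoc, m.U_mul]
  V_mul u v := by
    induction u with
    | zero => simp
    | add u₁ u₂ h₁ h₂ => simp [add_mul, h₁, h₂]
    | tmul y b =>
      induction v with
      | zero => simp
      | add v₁ v₂ h₁ h₂ => simp [mul_add, h₁, h₂]
      | tmul z c => simp [Algebra.TensorProduct.tmul_mul_tmul, mul_assoc, m.V_mul]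
  compat u v := by
    induction u with
    | zero => simp
    | add u₁ u₂ h₁ h₂ => simp [add_mul, h₁, h₂]
    | tmul y b =>
      induction v with
      | zero => simp
      | add v₁ v₂ h₁ h₂ => simp only [map_add, mul_add, h₁, h₂]
      | tmul z c => simp [Algebra.TensorProduct.tmul_mul_tmul, mul_assoc, m.compat]

/-- The multiplier `m ⊗ 1` of `R ⊗ A`, for `m ∈ M(R)`. -/
def mtensorOne (m : Multiplier k R) : Multiplier k (R ⊗[k] A) where
  U := map m.U LinearMap.id
  V := map m.V LinearMap.id
  U_mul u v := by
    induction u with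
    | zero => simp
    | add u₁ u₂ h₁ h₂ => simp [add_mul, h₁, h₂]
    | tmul y b =>
      induction v with
      | zero => simp
      | add v₁ v₂ h₁ h₂ => simp [mul_add, h₁, h₂]
      | tmul z c => simp [Algebra.TensorProduct.tmul_mul_tmul, m.U_mul]
  V_mul u v := by
    induction u with
    | zero => simp
    | add u₁ u₂ h₁ h₂ => simp [add_mul, h₁, h₂]
    | tmul y b =>
      induction v with
      | zero => simp
      | add v₁ v₂ h₁ h₂ => simp [mul_add, h₁, h₂]
      | tmul z c => simp [Algebra.TensorProduct.tmul_mul_tmul, m.V_mul]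
  compat u v := by
    induction u with
    | zero => simp
    | add u₁ u₂ h₁ h₂ => simp [add_mul, h₁, h₂]
    | tmul y b =>
      induction v with
      | zero => simp
      | add v₁ v₂ h₁ h₂ => simp only [map_add, mul_add, h₁, h₂]
      | tmul z c => simp [Algebra.TensorProduct.tmul_mul_tmul, m.compat]

/-- Apply a functional to the second tensor factor:  `x ⊗ a ↦ f a • x`. -/
def apT (f : A →ₗ[k] k) : R ⊗[k] A →ₗ[k] R :=
  (TensorProduct.rid k R).toLinearMap ∘ₗ lTensor R f

@[simp] lemma apT_tmul (f : A →ₗ[k] k) (x : R) (a : A) :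
    apT k R A f (x ⊗ₜ a) = f a • x := rfl

/-- Sum of pure tensors attached to a list of pairs. -/
def psum {M N : Type*} [AddCommGroup M] [Module k M] [AddCommGroup N] [Module k N]
    (l : List (M × N)) : M ⊗[k] N :=
  (l.map fun p => p.1 ⊗ₜ[k] p.2).sum

end Tensor
section MHAdef

variable (A : Type*) [NonUnitalRing A] [Module k A] [SMulCommClass k A A] [IsScalarTower k A A]

/-- Apply a functional to the first tensor factor: `a ⊗ b ↦ f a • b`. -/
def apF (f : A →ₗ[k] k) : A ⊗[k] A →ₗ[k] A :=
  (TensorProduct.lid k A).toLinearMap ∘ₗ rTensor A f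

@[simp] lemma apF_tmul (f : A →ₗ[k] k) (a b : A) : apF k A f (a ⊗ₜ b) = f a • b := rfl

/-- A *regular multiplier Hopf algebra* structure on a nondegenerate algebra `A`:
a comultiplication `Δ : A → M(A ⊗ A)` such that the four Galois-type maps
`T1 : a ⊗ b ↦ Δ(a)(1 ⊗ b)`, `T2 : a ⊗ b ↦ (a ⊗ 1)Δ(b)`, `T3 : a ⊗ b ↦ Δ(a)(b ⊗ 1)`,
`T4 : a ⊗ b ↦ (1 ⊗ b)Δ(a)` are (well-defined and) bijective from `A ⊗ A` onto `A ⊗ A`,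
together with its counit `ε` and (bijective) antipode `S`, subject to the usual axioms
(coassociativity and the counit and antipode laws, in their `T1`/`T2`-covered form). -/
structure MHA where
  nondeg : NondegProd A
  comul : A →ₗ[k] Multiplier k (A ⊗[k] A)
  comul_mul : ∀ a b : A, comul (a * b) = comul a * comul b
  T1 : A ⊗[k] A ≃ₗ[k] A ⊗[k] A
  T2 : A ⊗[k] A ≃ₗ[k] A ⊗[k] A
  T3 : A ⊗[k] A ≃ₗ[k] A ⊗[k] A
  T4 : A ⊗[k] A ≃ₗ[k] A ⊗[k] A
  hT1 : ∀ a b : A, comul a * oneT k A A b = Multiplier.incl (T1 (a ⊗ₜ b))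
  hT2 : ∀ a b : A, tOne k A A a * comul b = Multiplier.incl (T2 (a ⊗ₜ b))
  hT3 : ∀ a b : A, comul a * tOne k A A b = Multiplier.incl (T3 (a ⊗ₜ b))
  hT4 : ∀ a b : A, oneT k A A b * comul a = Multiplier.incl (T4 (a ⊗ₜ b))
  coassoc : ∀ a b c : A,
    (TensorProduct.assoc k A A A)
        ((rTensor A (T2.toLinearMap ∘ₗ TensorProduct.mk k A A a)) (T1 (b ⊗ₜ c)))
      = (lTensor A (T1.toLinearMap ∘ₗ (TensorProduct.mk k A A).flip c)) (T2 (a ⊗ₜ b))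
  counit : A →ₗ[k] k
  counit_mul : ∀ a b : A, counit (a * b) = counit a * counit b
  hcounit1 : ∀ a b : A, apF k A counit (T1 (a ⊗ₜ b)) = a * b
  hcounit2 : ∀ a b : A, apT k A A counit (T2 (a ⊗ₜ b)) = a * b
  S : A ≃ₗ[k] A
  S_antimul : ∀ a b : A, S (a * b) = S b * S a
  hS1 : ∀ a b : A, LinearMap.mul' k A ((rTensor A S.toLinearMap) (T1 (a ⊗ₜ b))) = counit a • b
  hS2 : ∀ a b : A, LinearMap.mul' k A ((lTensor A S.toLinearMap) (T2 (a ⊗ₜ b))) = counit b • a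

end MHAdef

section PComod

variable {k}
variable {A : Type*} [NonUnitalRing A] [Module k A] [SMulCommClass k A A] [IsScalarTower k A A]
variable (H : MHA k A)
variable (R : Type*) [NonUnitalRing R] [Module k R] [SMulCommClass k R R] [IsScalarTower k R R]

/-- `(R, ρ, E)` is a *partial `A`-comodule algebra* (Definition 3.5).  The data
`rmap`/`lmap` records the elements `ρ(x)(1 ⊗ a)` and `(1 ⊗ a)ρ(x)` of `R ⊗ A`.
Condition `c3` is the coassociativity
`(ρ ⊗ ι)(ρ(x)) = (E ⊗ 1)(ι ⊗ Δ)(ρ(x))` in its fully covered form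
`x⁽⁰⁾⁽⁰⁾ ⊗ x⁽⁰⁾⁽¹⁾a ⊗ x⁽¹⁾b = Σᵢ E(x⁽⁰⁾ ⊗ (x⁽¹⁾aᵢ)₍₁₎) ⊗ (x⁽¹⁾aᵢ)₍₂₎bᵢ`
for any representation `Σᵢ aᵢ ⊗ bᵢ = T1⁻¹(a ⊗ b)`. -/
structure IsPComod (ρ : R →ₗ[k] Multiplier k (R ⊗[k] A)) (E : Multiplier k (R ⊗[k] A))
    (rmap : R →ₗ[k] A →ₗ[k] R ⊗[k] A) (lmap : A →ₗ[k] R →ₗ[k] R ⊗[k] A) : Prop where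
  ρ_mul : ∀ x y : R, ρ (x * y) = ρ x * ρ y
  ρ_inj : Function.Injective ρ
  E_idem : E * E = E
  hrmap : ∀ (x : R) (a : A), ρ x * oneT k R A a = Multiplier.incl (rmap x a)
  hlmap : ∀ (a : A) (x : R), oneT k R A a * ρ x = Multiplier.incl (lmap a x)
  c1l : ∀ a : A, ∃ l : List (Multiplier k R × A),
      oneT k R A a * E = (l.map fun p => mtensor k R A p.1 p.2).sum
  c1r : ∀ a : A, ∃ l : List (Multiplier k R × A),
      E * oneT k R A a = (l.map fun p => mtensor k R A p.1 p.2).sum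
  c2l : ∀ (x : R) (a : A), ∃ u : R ⊗[k] A, rmap x a = E.U u
  c2r : ∀ (a : A) (x : R), ∃ u : R ⊗[k] A, lmap a x = E.V u
  c3 : ∀ (x : R) (a b : A) (l : List (A × A)), psum k l = H.T1.symm (a ⊗ₜ b) →
      rTensor A (rmap.flip a) (rmap x b)
        = (l.map fun p => (rTensor A E.U) ((TensorProduct.assoc k R A A).symm
            ((lTensor R (H.T1.toLinearMap ∘ₗ (TensorProduct.mk k A A).flip p.2))
              (rmap x p.1)))).sum

/-- A *symmetric* partial `A`-comodule algebra (Definition 3.5 (iv)):  additionally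
`(ρ ⊗ ι)(ρ(x)) = (ι ⊗ Δ)(ρ(x))(E ⊗ 1)`, in the fully covered form
`x⁽⁰⁾⁽⁰⁾ ⊗ ax⁽⁰⁾⁽¹⁾ ⊗ bx⁽¹⁾ = Σᵢ (x⁽⁰⁾ ⊗ (aᵢx⁽¹⁾)₍₁₎)E ⊗ bᵢ(aᵢx⁽¹⁾)₍₂₎` for any
representation `Σᵢ aᵢ ⊗ bᵢ = T4⁻¹(a ⊗ b)`. -/
structure IsSymPComod (ρ : R →ₗ[k] Multiplier k (R ⊗[k] A)) (E : Multiplier k (R ⊗[k] A))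
    (rmap : R →ₗ[k] A →ₗ[k] R ⊗[k] A) (lmap : A →ₗ[k] R →ₗ[k] R ⊗[k] A)
    extends IsPComod H R ρ E rmap lmap : Prop where
  c4 : ∀ (x : R) (a b : A) (l : List (A × A)), psum k l = H.T4.symm (a ⊗ₜ b) →
      rTensor A (lmap a) (lmap b x)
        = (l.map fun p => (rTensor A E.V) ((TensorProduct.assoc k R A A).symm
            ((lTensor R (H.T4.toLinearMap ∘ₗ (TensorProduct.mk k A A).flip p.2))
              (lmap p.1 x)))).sum

/-- `R` is a (global) right `A`-comodule algebra via `ρ` (Definition 3.1), with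
`rmap`/`lmap` recording `ρ(x)(1 ⊗ a) ∈ R ⊗ A` and `(1 ⊗ a)ρ(x) ∈ R ⊗ A`;
coassociativity `(ρ ⊗ ι)ρ = (ι ⊗ Δ)ρ` is stated in its fully covered form. -/
structure IsComod (ρ : R →ₗ[k] Multiplier k (R ⊗[k] A))
    (rmap : R →ₗ[k] A →ₗ[k] R ⊗[k] A) (lmap : A →ₗ[k] R →ₗ[k] R ⊗[k] A) : Prop where
  ρ_mul : ∀ x y : R, ρ (x * y) = ρ x * ρ y
  ρ_inj : Function.Injective ρ
  hrmap : ∀ (x : R) (a : A), ρ x * oneT k R A a = Multiplier.incl (rmap x a)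
  hlmap : ∀ (a : A) (x : R), oneT k R A a * ρ x = Multiplier.incl (lmap a x)
  coassoc : ∀ (x : R) (a b : A) (l : List (A × A)), psum k l = H.T1.symm (a ⊗ₜ b) →
      rTensor A (rmap.flip a) (rmap x b)
        = (l.map fun p => (TensorProduct.assoc k R A A).symm
            ((lTensor R (H.T1.toLinearMap ∘ₗ (TensorProduct.mk k A A).flip p.2))
              (rmap x p.1))).sum

end PComod
section PMod

variable {k}
variable {A : Type*} [NonUnitalRing A] [Module k A] [SMulCommClass k A A] [IsScalarTower k A A]
variable (H : MHA k A)
variable (R : Type*) [NonUnitalRing R] [Module k R] [SMulCommClass k R R] [IsScalarTower k R R]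

/-- `(R, ⬝, 𝔢)` is a *partial `A`-module algebra* (Definition 4.5).  Sweedler
expressions are stated for arbitrary list representations of the corresponding
covered elements; e.g. condition (i) reads
`a ⬝ (x (b ⬝ y)) = Σᵢ (pᵢ ⬝ x)(qᵢ ⬝ y)` whenever `Σᵢ pᵢ ⊗ qᵢ = Δ(a)(1 ⊗ b) = T1(a ⊗ b)`,
and in (ii) one uses the covering `a₍₁₎ ⊗ S(a₍₂₎)b = (ι ⊗ S)((1 ⊗ S⁻¹(b))Δ(a))`. -/
structure IsPModAlg (act : A →ₗ[k] R →ₗ[k] R) (e : A →ₗ[k] Multiplier k R) : Prop where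
  cond1 : ∀ (a b : A) (x y : R) (l : List (A × A)), psum k l = H.T1 (a ⊗ₜ b) →
      act a (x * act b y) = (l.map fun p => act p.1 x * act p.2 y).sum
  cond2a : ∀ (a b : A) (x : R) (l : List (A × A)), psum k l = H.T4 (a ⊗ₜ H.S.symm b) →
      (e a).U (act b x) = (l.map fun p => act p.1 (act (H.S p.2) x)).sum
  cond2b : ∀ (a : A) (x : R),
      (e a).U x ∈ Submodule.span k {z : R | ∃ (b : A) (y : R), z = act b y}
  cond3 : ∀ (la : List A) (lx : List R), ∃ b : A,
      (∀ a ∈ la, a * b = a ∧ b * a = a) ∧ ∀ a ∈ la, ∀ x ∈ lx, act a x = act a (act b x)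
  cond4 : ∀ x : R, (∀ a : A, act a x = 0) → x = 0

/-- A *symmetric* partial `A`-module algebra (Definition 4.5 (v)-(vii)).  In (vi),
one uses the covering `a₍₂₎ ⊗ S⁻¹(a₍₁₎)b = σ((S⁻¹ ⊗ ι)((S(b) ⊗ 1)Δ(a)))`. -/
structure IsSymPModAlg (act : A →ₗ[k] R →ₗ[k] R) (e : A →ₗ[k] Multiplier k R)
    extends IsPModAlg H R act e : Prop where
  cond5 : ∀ (a b : A) (x y : R) (l : List (A × A)), psum k l = H.T3 (a ⊗ₜ b) →
      act a (act b x * y) = (l.map fun p => act p.1 x * act p.2 y).sum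
  cond6 : ∀ (a b : A) (x : R) (l : List (A × A)), psum k l = H.T2 (H.S b ⊗ₜ a) →
      (e a).V (act b x) = (l.map fun p => act p.2 (act (H.S.symm p.1) x)).sum
  cond7 : ∀ (a : A) (x : R),
      (e a).V x ∈ Submodule.span k {z : R | ∃ (b : A) (y : R), z = act b y}

/-- `R` is a (global, unitary) left `A`-module algebra (Definition 4.1). -/
structure IsModAlg (act : A →ₗ[k] R →ₗ[k] R) : Prop where
  assoc : ∀ (a b : A) (x : R), act a (act b x) = act (a * b) x
  unital : Submodule.span k {z : R | ∃ (a : A) (x : R), z = act a x} = ⊤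
  mul_cond : ∀ (a b : A) (x y : R) (l : List (A × A)), psum k l = H.T1 (a ⊗ₜ b) →
      act a (x * act b y) = (l.map fun p => act p.1 x * act p.2 y).sum

end PMod

section Dual

variable {k}
variable {A : Type*} [NonUnitalRing A] [Module k A] [SMulCommClass k A A] [IsScalarTower k A A]
variable (H : MHA k A)
variable (Ahat : Type*) [NonUnitalRing Ahat] [Module k Ahat] [SMulCommClass k Ahat Ahat]
  [IsScalarTower k Ahat Ahat] (Hh : MHA k Ahat)

/-- A realization of the *dual* `Â = {φ(– a) : a ∈ A}` of a regular multiplier Hopf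
algebra `A` with left integral `φ` (as in (2.1)): a regular multiplier Hopf algebra
`Â` together with the linear bijections `hat : a ↦ φ(– a)` and `hat' : b ↦ φ(b –)`,
the evaluation pairing `ev`, the product rule `(ŵ û)(c) = (w ⊗ u)(Δ c)`, the
coproduct rules (2.5) and (2.6) read through `hat`, and the modular element
`δ ∈ M(A)` of (5.1), `(φ ⊗ ι)Δ(a) = φ(a)δ`. -/
structure DualPair where
  φ : A →ₗ[k] k
  φ_ne : φ ≠ 0
  /-- `(ι ⊗ φ)((b ⊗ 1)Δ(a)) = φ(a) b` : left invariance of the integral. -/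
  φ_int : ∀ a b : A, apT k A A φ (H.T2 (b ⊗ₜ a)) = φ a • b
  /-- `(ι ⊗ φ)(Δ(a)(b ⊗ 1)) = φ(a) b` : left invariance of the integral. -/
  φ_int' : ∀ a b : A, apT k A A φ (H.T3 (a ⊗ₜ b)) = φ a • b
  hat : A ≃ₗ[k] Ahat
  hat' : A ≃ₗ[k] Ahat
  ev : Ahat →ₗ[k] A →ₗ[k] k
  ev_hat : ∀ a x : A, ev (hat a) x = φ (x * a)
  ev_hat' : ∀ b x : A, ev (hat' b) x = φ (b * x)
  /-- the product of `Â`: `(φ(– a) u)(c) = Σ φ(c₍₁₎ a) u(c₍₂₎)`. -/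
  ev_mul : ∀ (a : A) (u : Ahat) (c : A),
      ev (hat a * u) c
        = (TensorProduct.lid k k) ((map φ (ev u)) (H.T3 (c ⊗ₜ a)))
  /-- identity (2.5): `Δ̂(φ(– a))(1 ⊗ φ(– b)) = φ(– S⁻¹(b₍₁₎)a) ⊗ φ(– b₍₂₎)`,
  read through `hat⁻¹ ⊗ hat⁻¹` and covered on the right leg by `c`. -/
  hatT1 : ∀ a b c : A,
      (lTensor A (LinearMap.mulRight k c))
          ((map hat.symm.toLinearMap hat.symm.toLinearMap) (Hh.T1 (hat a ⊗ₜ hat b)))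
        = rTensor A (LinearMap.mulRight k a ∘ₗ H.S.symm.toLinearMap) (H.T1 (b ⊗ₜ c))
  /-- identity (2.6): `(ι ⊗ Ŝ)((1 ⊗ Ŝ⁻¹(φ(– b)))Δ̂(φ(– a))) = φ(– b₍₁₎a) ⊗ φ(– b₍₂₎)`,
  read through `hat⁻¹ ⊗ hat⁻¹` and covered on the right leg by `c`. -/
  hatT2 : ∀ a b c : A,
      (lTensor A (LinearMap.mulRight k c))
          ((map hat.symm.toLinearMap hat.symm.toLinearMap)
            ((lTensor Ahat Hh.S.toLinearMap) (Hh.T4 (hat a ⊗ₜ Hh.S.symm (hat b)))))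
        = rTensor A (LinearMap.mulRight k a) (H.T1 (b ⊗ₜ c))
  /-- the modular element `δ`, with `(φ ⊗ ι)(Δ(a)(1 ⊗ b)) = φ(a) • (δ b)`. -/
  delta : Multiplier k A
  deltaInv : Multiplier k A
  delta_inv : delta * deltaInv = 1 ∧ deltaInv * delta = 1
  hdelta : ∀ a b : A, apF k A φ (H.T1 (a ⊗ₜ b)) = φ a • delta.U b

end Dual

/-!
Write `a · x = e (a ▷ x)`. Since `e` is a unit of the right ideal `L`, products and iterates of
the induced action collapse to `(p · x)(q · y) = e (p ▷ x)(q ▷ y)` and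
`p · (q · x) = e (p ▷ (e (q ▷ x)))`, so every axiom becomes an identity in `R` indexed by a
covered coproduct. Axioms (i) and (v) are the module-algebra law in its `T1`- and `T3`-covered
forms, (ii) is the antipode identity `a₍₁₎ ⊗ a₍₂₎ S(a₍₃₎) S(c) = a ⊗ S(c)`, and (vi) is the same
identity for the co-opposite Hopf algebra, which becomes available once `e` is central, as it is
when `L` is two-sided. The unit conditions come from local units of `A`, which every multiplier
Hopf algebra has by a nondegeneracy argument in `A ⊗ A`.
-/

section TensorSeparation

variable {k}
variable {M M' N P : Type*} [AddCommGroup M] [Module k M] [AddCommGroup M'] [Module k M']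
  [AddCommGroup N] [Module k N] [AddCommGroup P] [Module k P]

theorem TensorProduct.rTensor_lTensor_apply (f : M →ₗ[k] M') (g : N →ₗ[k] P) (z : M ⊗[k] N) :
    rTensor P f (lTensor M g z) = lTensor M' g (rTensor N f z) := by
  rw [← LinearMap.comp_apply, rTensor_comp_lTensor, ← lTensor_comp_rTensor, LinearMap.comp_apply]

theorem TensorProduct.assoc_lTensor {Q : Type*} [AddCommGroup Q] [Module k Q] (f : P →ₗ[k] Q)
    (u : (M ⊗[k] N) ⊗[k] P) :
    TensorProduct.assoc k M N Q (lTensor (M ⊗[k] N) f u)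
      = lTensor M (lTensor N f) (TensorProduct.assoc k M N P u) := by
  simp [lTensor_tensor]

theorem TensorProduct.assoc_rTensor_rTensor (g : M →ₗ[k] M') (u : (M ⊗[k] N) ⊗[k] P) :
    TensorProduct.assoc k M' N P (rTensor P (rTensor N g) u)
      = rTensor (N ⊗[k] P) g (TensorProduct.assoc k M N P u) := by
  simp [rTensor_tensor]

theorem TensorProduct.ext_of_forall_rTensor {ι : Type*} (f : ι → M →ₗ[k] M')
    (hf : ∀ m, (∀ i, f i m = 0) → m = 0) {u v : M ⊗[k] N}
    (h : ∀ i, rTensor N (f i) u = rTensor N (f i) v) : u = v := by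
  classical
  let coeff := equivFinsuppOfBasisRight (M := M) (Module.Basis.ofVectorSpace k N)
  have coeff_rTensor : ∀ (g : M →ₗ[k] M') (z : M ⊗[k] N) j,
      equivFinsuppOfBasisRight (Module.Basis.ofVectorSpace k N) (rTensor N g z) j
        = g (coeff z j) := by
    intro g z j
    induction z with
    | zero => simp
    | add z₁ z₂ h₁ h₂ => simp [h₁, h₂]
    | tmul m n => simp [coeff]
  rw [← sub_eq_zero, ← coeff.map_eq_zero_iff]
  ext j
  refine hf _ fun i => ?_
  rw [← coeff_rTensor, map_sub, h i, sub_self, map_zero, Finsupp.zero_apply]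

theorem TensorProduct.ext_of_forall_lTensor {ι : Type*} (f : ι → M →ₗ[k] M')
    (hf : ∀ m, (∀ i, f i m = 0) → m = 0) {u v : N ⊗[k] M}
    (h : ∀ i, lTensor N (f i) u = lTensor N (f i) v) : u = v := by
  apply (TensorProduct.comm k N M).injective
  refine ext_of_forall_rTensor f hf fun i => ?_
  rw [rTensor_comm, rTensor_comm, h i]

theorem TensorProduct.mem_range_lTensor_of_forall_rTensor {ι : Type*} (f : ι → M →ₗ[k] M')
    (hf : ∀ m, (∀ i, f i m = 0) → m = 0) (g : N →ₗ[k] P) {u : M ⊗[k] P}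
    (h : ∀ i, rTensor P (f i) u ∈ range (lTensor M' g)) : u ∈ range (lTensor M g) := by
  have hexact := lTensor_exact M (LinearMap.exact_iff.mpr (range g).ker_mkQ)
    (range g).mkQ_surjective
  rw [← LinearMap.exact_iff.mp hexact, mem_ker, ← map_zero (lTensor M (range g).mkQ)]
  refine ext_of_forall_rTensor f hf fun i => ?_
  obtain ⟨w, hw⟩ := h i
  rw [map_zero, rTensor_lTensor_apply, ← hw, ← LinearMap.comp_apply, ← lTensor_comp,
    range_mkQ_comp, lTensor_zero, LinearMap.zero_apply, map_zero]

theorem TensorProduct.mem_range_rTensor_of_forall_lTensor {ι : Type*} (f : ι → M →ₗ[k] M')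
    (hf : ∀ m, (∀ i, f i m = 0) → m = 0) (g : N →ₗ[k] P) {u : P ⊗[k] M}
    (h : ∀ i, lTensor P (f i) u ∈ range (rTensor M' g)) : u ∈ range (rTensor M g) := by
  have hexact := rTensor_exact M (LinearMap.exact_iff.mpr (range g).ker_mkQ)
    (range g).mkQ_surjective
  rw [← LinearMap.exact_iff.mp hexact, mem_ker, ← map_zero (rTensor M (range g).mkQ)]
  refine ext_of_forall_lTensor f hf fun i => ?_
  obtain ⟨w, hw⟩ := h i
  rw [map_zero, ← rTensor_lTensor_apply, ← hw, ← LinearMap.comp_apply, ← rTensor_comp,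
    range_mkQ_comp, rTensor_zero, LinearMap.zero_apply, map_zero]

end TensorSeparation

section Nondegenerate

variable {k}
variable {A B : Type*} [NonUnitalRing A] [Module k A] [SMulCommClass k A A] [IsScalarTower k A A]
  [NonUnitalRing B] [Module k B] [SMulCommClass k B B] [IsScalarTower k B B]
variable {N : Type*} [AddCommGroup N] [Module k N]

namespace NondegProd

theorem eq_of_forall_mul_left (hA : NondegProd A) {u v : A} (h : ∀ x, x * u = x * v) :
    u = v :=
  sub_eq_zero.mp <| hA.2 _ fun x => by rw [mul_sub, h x, sub_self]

theorem eq_of_forall_mul_right (hA : NondegProd A) {u v : A} (h : ∀ x, u * x = v * x) :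
    u = v :=
  sub_eq_zero.mp <| hA.1 _ fun x => by rw [sub_mul, h x, sub_self]

theorem ext_rTensor_mulLeft (hA : NondegProd A) {u v : A ⊗[k] N}
    (h : ∀ x : A, rTensor N (mulLeft k x) u = rTensor N (mulLeft k x) v) : u = v :=
  ext_of_forall_rTensor _ hA.2 h

theorem ext_rTensor_mulRight (hA : NondegProd A) {u v : A ⊗[k] N}
    (h : ∀ x : A, rTensor N (mulRight k x) u = rTensor N (mulRight k x) v) : u = v :=
  ext_of_forall_rTensor _ hA.1 h

theorem ext_lTensor_mulLeft (hA : NondegProd A) {u v : N ⊗[k] A}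
    (h : ∀ x : A, lTensor N (mulLeft k x) u = lTensor N (mulLeft k x) v) : u = v :=
  ext_of_forall_lTensor _ hA.2 h

theorem ext_lTensor_mulRight (hA : NondegProd A) {u v : N ⊗[k] A}
    (h : ∀ x : A, lTensor N (mulRight k x) u = lTensor N (mulRight k x) v) : u = v :=
  ext_of_forall_lTensor _ hA.1 h

theorem ext_lTensor_lTensor_mulRight {N' : Type*} [AddCommGroup N'] [Module k N']
    (hA : NondegProd A) {u v : N ⊗[k] (N' ⊗[k] A)}
    (h : ∀ x : A,
      lTensor N (lTensor N' (mulRight k x)) u = lTensor N (lTensor N' (mulRight k x)) v) :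
    u = v :=
  ext_of_forall_lTensor _ (fun _ hm => hA.ext_lTensor_mulRight fun x => by rw [hm x, map_zero]) h

theorem tensorProduct (hA : NondegProd A) (hB : NondegProd B) : NondegProd (A ⊗[k] B) := by
  have mul_tmul : ∀ (u : A ⊗[k] B) x y, u * (x ⊗ₜ y) = map (mulRight k x) (mulRight k y) u := by
    intro u x y
    induction u with
    | zero => simp
    | add _ _ hu hv => simp [add_mul, hu, hv]
    | tmul a b => simp [Algebra.TensorProduct.tmul_mul_tmul]
  have tmul_mul : ∀ (u : A ⊗[k] B) x y, (x ⊗ₜ y) * u = map (mulLeft k x) (mulLeft k y) u := by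
    intro u x y
    induction u with
    | zero => simp
    | add _ _ hu hv => simp [mul_add, hu, hv]
    | tmul a b => simp [Algebra.TensorProduct.tmul_mul_tmul]
  constructor
  · refine fun u hu => hB.ext_lTensor_mulRight fun y => hA.ext_rTensor_mulRight fun x => ?_
    rw [← LinearMap.comp_apply, rTensor_comp_lTensor, ← mul_tmul, hu]
    simp
  · refine fun u hu => hB.ext_lTensor_mulLeft fun y => hA.ext_rTensor_mulLeft fun x => ?_
    rw [← LinearMap.comp_apply, rTensor_comp_lTensor, ← tmul_mul, hu]
    simp

theorem incl_injective (hA : NondegProd A) :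
    Function.Injective (Multiplier.incl (k := k) : A → Multiplier k A) := fun _ _ huv =>
  hA.eq_of_forall_mul_right fun x => congrArg (fun m => m.U x) huv

end NondegProd

end Nondegenerate

section Multipliers

variable {k}
variable {A : Type*} [NonUnitalRing A] [Module k A] [SMulCommClass k A A] [IsScalarTower k A A]

namespace Multiplier

theorem mul_incl (m : Multiplier k A) (u : A) : m * incl u = incl (m.U u) := by
  ext x
  · exact m.U_mul u x
  · exact m.compat x u

theorem incl_mul (m : Multiplier k A) (u : A) : incl u * m = incl (m.V u) := by
  ext x
  · exact (m.compat u x).symm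
  · exact m.V_mul x u

end Multiplier

theorem oneT_mul (a b : A) : oneT k A A (a * b) = oneT k A A a * oneT k A A b := by
  refine Multiplier.ext (LinearMap.ext fun z => ?_) (LinearMap.ext fun z => ?_)
  · show lTensor A (mulLeft k (a * b)) z = lTensor A (mulLeft k a) (lTensor A (mulLeft k b) z)
    rw [← LinearMap.comp_apply, ← lTensor_comp, ← mulLeft_mul]
  · show lTensor A (mulRight k (a * b)) z = lTensor A (mulRight k b) (lTensor A (mulRight k a) z)
    rw [← LinearMap.comp_apply, ← lTensor_comp, ← mulRight_mul]

theorem tOne_mul (a b : A) : tOne k A A (a * b) = tOne k A A a * tOne k A A b := by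
  refine Multiplier.ext (LinearMap.ext fun z => ?_) (LinearMap.ext fun z => ?_)
  · show rTensor A (mulLeft k (a * b)) z = rTensor A (mulLeft k a) (rTensor A (mulLeft k b) z)
    rw [← LinearMap.comp_apply, ← rTensor_comp, ← mulLeft_mul]
  · show rTensor A (mulRight k (a * b)) z = rTensor A (mulRight k b) (rTensor A (mulRight k a) z)
    rw [← LinearMap.comp_apply, ← rTensor_comp, ← mulRight_mul]

theorem tOne_mul_oneT_comm (x a : A) :
    tOne k A A x * oneT k A A a = oneT k A A a * tOne k A A x := by
  refine Multiplier.ext (LinearMap.ext fun z => ?_) (LinearMap.ext fun z => ?_)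
  · show rTensor A (mulLeft k x) (lTensor A (mulLeft k a) z)
      = lTensor A (mulLeft k a) (rTensor A (mulLeft k x) z)
    exact rTensor_lTensor_apply _ _ _
  · show lTensor A (mulRight k a) (rTensor A (mulRight k x) z)
      = rTensor A (mulRight k x) (lTensor A (mulRight k a) z)
    exact (rTensor_lTensor_apply _ _ _).symm

theorem incl_tmul (x a : A) :
    Multiplier.incl (k := k) (x ⊗ₜ a) = tOne k A A x * oneT k A A a := by
  refine Multiplier.ext (LinearMap.ext fun z => ?_) (LinearMap.ext fun z => ?_)
  · show (x ⊗ₜ a) * z = rTensor A (mulLeft k x) (lTensor A (mulLeft k a) z)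
    induction z with
    | zero => simp
    | add _ _ h₁ h₂ => simp [mul_add, h₁, h₂]
    | tmul b c => simp [Algebra.TensorProduct.tmul_mul_tmul]
  · show z * (x ⊗ₜ a) = lTensor A (mulRight k a) (rTensor A (mulRight k x) z)
    induction z with
    | zero => simp
    | add _ _ h₁ h₂ => simp [add_mul, h₁, h₂]
    | tmul b c => simp [Algebra.TensorProduct.tmul_mul_tmul]

end Multipliers

section HopfRelations

variable {k}
variable {A : Type*} [NonUnitalRing A] [Module k A] [SMulCommClass k A A] [IsScalarTower k A A]

theorem incl_lTensor_mulLeft (z : A) (E : A ⊗[k] A) :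
    Multiplier.incl (lTensor A (mulLeft k z) E) = oneT k A A z * Multiplier.incl E := by
  rw [Multiplier.mul_incl]; rfl

theorem incl_lTensor_mulRight (w : A) (E : A ⊗[k] A) :
    Multiplier.incl (lTensor A (mulRight k w) E) = Multiplier.incl E * oneT k A A w := by
  rw [Multiplier.incl_mul]; rfl

theorem incl_rTensor_mulLeft (x : A) (E : A ⊗[k] A) :
    Multiplier.incl (rTensor A (mulLeft k x) E) = tOne k A A x * Multiplier.incl E := by
  rw [Multiplier.mul_incl]; rfl

theorem incl_rTensor_mulRight (b : A) (E : A ⊗[k] A) :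
    Multiplier.incl (rTensor A (mulRight k b) E) = Multiplier.incl E * tOne k A A b := by
  rw [Multiplier.incl_mul]; rfl

namespace MHA

theorem incl_injective (H : MHA k A) :
    Function.Injective (Multiplier.incl (k := k) : A ⊗[k] A → _) :=
  (H.nondeg.tensorProduct H.nondeg).incl_injective

variable (H : MHA k A)

theorem rTensor_mulLeft_T1 (x y z : A) :
    rTensor A (mulLeft k x) (H.T1 (y ⊗ₜ z)) = lTensor A (mulRight k z) (H.T2 (x ⊗ₜ y)) := by
  apply H.incl_injective
  rw [incl_rTensor_mulLeft, incl_lTensor_mulRight, ← H.hT1, ← H.hT2, mul_assoc]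

theorem rTensor_mulRight_T1 (a b c : A) :
    rTensor A (mulRight k b) (H.T1 (a ⊗ₜ c)) = lTensor A (mulRight k c) (H.T3 (a ⊗ₜ b)) := by
  apply H.incl_injective
  rw [incl_rTensor_mulRight, incl_lTensor_mulRight, ← H.hT1, ← H.hT3, mul_assoc, mul_assoc,
    tOne_mul_oneT_comm]

theorem rTensor_mulLeft_T3 (x b c : A) :
    rTensor A (mulLeft k x) (H.T3 (b ⊗ₜ c)) = rTensor A (mulRight k c) (H.T2 (x ⊗ₜ b)) := by
  apply H.incl_injective
  rw [incl_rTensor_mulLeft, incl_rTensor_mulRight, ← H.hT3, ← H.hT2, mul_assoc]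

theorem lTensor_mulRight_T4 (w y z : A) :
    lTensor A (mulRight k w) (H.T4 (y ⊗ₜ z)) = lTensor A (mulLeft k z) (H.T1 (y ⊗ₜ w)) := by
  apply H.incl_injective
  rw [incl_lTensor_mulRight, incl_lTensor_mulLeft, ← H.hT4, ← H.hT1, mul_assoc]

theorem rTensor_mulLeft_T4 (x v c : A) :
    rTensor A (mulLeft k x) (H.T4 (v ⊗ₜ c)) = lTensor A (mulLeft k c) (H.T2 (x ⊗ₜ v)) := by
  apply H.incl_injective
  rw [incl_rTensor_mulLeft, incl_lTensor_mulLeft, ← H.hT4, ← H.hT2, ← mul_assoc, ← mul_assoc,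
    tOne_mul_oneT_comm]

theorem comul_U_tmul (x c a : A) :
    (H.comul x).U (c ⊗ₜ a) = lTensor A (mulRight k a) (H.T3 (x ⊗ₜ c)) := by
  apply H.incl_injective
  rw [← Multiplier.mul_incl, incl_lTensor_mulRight, incl_tmul, ← H.hT3, mul_assoc]

theorem comul_V_tmul (y a c : A) :
    (H.comul y).V (a ⊗ₜ c) = rTensor A (mulLeft k a) (H.T4 (y ⊗ₜ c)) := by
  apply H.incl_injective
  rw [← Multiplier.incl_mul, incl_rTensor_mulLeft, incl_tmul, ← H.hT4, mul_assoc]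

theorem T1_comp_rTensor_mulLeft (x : A) :
    H.T1.toLinearMap ∘ₗ rTensor A (mulLeft k x) = (H.comul x).U ∘ₗ H.T1.toLinearMap := by
  refine TensorProduct.ext' fun p q => H.incl_injective ?_
  simp only [LinearMap.comp_apply, rTensor_tmul, mulLeft_apply, LinearEquiv.coe_coe]
  rw [← Multiplier.mul_incl, ← H.hT1, ← H.hT1, H.comul_mul, mul_assoc]

theorem T1_comp_lTensor_mulRight (w : A) :
    H.T1.toLinearMap ∘ₗ lTensor A (mulRight k w)
      = lTensor A (mulRight k w) ∘ₗ H.T1.toLinearMap := by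
  refine TensorProduct.ext' fun p q => H.incl_injective ?_
  simp only [LinearMap.comp_apply, lTensor_tmul, mulRight_apply, LinearEquiv.coe_coe]
  rw [incl_lTensor_mulRight, ← H.hT1, ← H.hT1, oneT_mul, mul_assoc]

theorem T2_comp_lTensor_mulRight (y : A) :
    H.T2.toLinearMap ∘ₗ lTensor A (mulRight k y) = (H.comul y).V ∘ₗ H.T2.toLinearMap := by
  refine TensorProduct.ext' fun p q => H.incl_injective ?_
  simp only [LinearMap.comp_apply, lTensor_tmul, mulRight_apply, LinearEquiv.coe_coe]
  rw [← Multiplier.incl_mul, ← H.hT2, ← H.hT2, H.comul_mul, mul_assoc]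

theorem T2_comp_rTensor_mulLeft (x : A) :
    H.T2.toLinearMap ∘ₗ rTensor A (mulLeft k x) = rTensor A (mulLeft k x) ∘ₗ H.T2.toLinearMap := by
  refine TensorProduct.ext' fun p q => H.incl_injective ?_
  simp only [LinearMap.comp_apply, rTensor_tmul, mulLeft_apply, LinearEquiv.coe_coe]
  rw [incl_rTensor_mulLeft, ← H.hT2, ← H.hT2, tOne_mul, mul_assoc]

end MHA

end HopfRelations

section CounitAntipode

variable {k}
variable {A : Type*} [NonUnitalRing A] [Module k A] [SMulCommClass k A A] [IsScalarTower k A A]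

theorem apF_lTensor (f : A →ₗ[k] k) (g : A →ₗ[k] A) (z : A ⊗[k] A) :
    apF k A f (lTensor A g z) = g (apF k A f z) := by
  induction z with
  | zero => simp
  | add _ _ h₁ h₂ => simp [h₁, h₂]
  | tmul a b => simp

theorem apT_rTensor (f : A →ₗ[k] k) (g : A →ₗ[k] A) (z : A ⊗[k] A) :
    apT k A A f (rTensor A g z) = g (apT k A A f z) := by
  induction z with
  | zero => simp
  | add _ _ h₁ h₂ => simp [h₁, h₂]
  | tmul a b => simp

theorem apF_comm (f : A →ₗ[k] k) (z : A ⊗[k] A) :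
    apF k A f (TensorProduct.comm k A A z) = apT k A A f z := by
  induction z with
  | zero => simp
  | add _ _ h₁ h₂ => simp [h₁, h₂]
  | tmul a b => simp

theorem mul'_rTensor_mulLeft (x : A) (u : A ⊗[k] A) :
    mul' k A (rTensor A (mulLeft k x) u) = x * mul' k A u := by
  induction u with
  | zero => simp
  | add _ _ h₁ h₂ => simp [mul_add, h₁, h₂]
  | tmul a b => simp [mul_assoc]

theorem mul'_lTensor_mulRight (x : A) (u : A ⊗[k] A) :
    mul' k A (lTensor A (mulRight k x) u) = mul' k A u * x := by
  induction u with
  | zero => simp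
  | add _ _ h₁ h₂ => simp [add_mul, h₁, h₂]
  | tmul a b => simp [mul_assoc]

namespace MHA

variable (H : MHA k A)

theorem S_comp_mulLeft (c : A) :
    H.S.toLinearMap ∘ₗ mulLeft k c = mulRight k (H.S c) ∘ₗ H.S.toLinearMap :=
  LinearMap.ext fun a => H.S_antimul c a

theorem S_comp_mulRight (b : A) :
    H.S.toLinearMap ∘ₗ mulRight k b = mulLeft k (H.S b) ∘ₗ H.S.toLinearMap :=
  LinearMap.ext fun a => H.S_antimul a b

theorem apT_counit_T3 (a b : A) : apT k A A H.counit (H.T3 (a ⊗ₜ b)) = a * b := by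
  refine H.nondeg.eq_of_forall_mul_left fun x => ?_
  rw [← mulLeft_apply k x, ← apT_rTensor, rTensor_mulLeft_T3, apT_rTensor, H.hcounit2]
  simp [mul_assoc]

theorem apF_counit_T4 (v c : A) : apF k A H.counit (H.T4 (v ⊗ₜ c)) = c * v := by
  refine H.nondeg.eq_of_forall_mul_right fun w => ?_
  rw [← mulRight_apply k w, ← apF_lTensor, lTensor_mulRight_T4, apF_lTensor, H.hcounit1]
  simp [mul_assoc]

theorem mul'_lTensor_S_T4 (v c : A) :
    mul' k A (lTensor A H.S.toLinearMap (H.T4 (v ⊗ₜ c))) = H.counit v • H.S c := by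
  refine H.nondeg.eq_of_forall_mul_left fun x => ?_
  rw [← mul'_rTensor_mulLeft, rTensor_lTensor_apply, rTensor_mulLeft_T4, ← lTensor_comp_apply,
    S_comp_mulLeft, lTensor_comp_apply, mul'_lTensor_mulRight,
    H.hS2, smul_mul_assoc, mul_smul_comm]

theorem mul'_rTensor_S_T3 (a b : A) :
    mul' k A (rTensor A H.S.toLinearMap (H.T3 (a ⊗ₜ b))) = H.counit a • H.S b := by
  refine H.nondeg.eq_of_forall_mul_right fun x => ?_
  rw [← mul'_lTensor_mulRight, ← rTensor_lTensor_apply, ← rTensor_mulRight_T1, ← rTensor_comp_apply,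
    S_comp_mulRight, rTensor_comp_apply, mul'_rTensor_mulLeft,
    H.hS1, mul_smul_comm, smul_mul_assoc]

end MHA

end CounitAntipode

section Coassociativity

variable {k}
variable {A : Type*} [NonUnitalRing A] [Module k A] [SMulCommClass k A A] [IsScalarTower k A A]

namespace MHA

variable (H : MHA k A)

local notation "α" => TensorProduct.assoc k A A A

theorem assoc_rTensor_T4_of_T1 (F : A →ₗ[k] A ⊗[k] A) (a c : A) (D : A ⊗[k] A)
    (hF : ∀ w, α (rTensor A F (H.T1 (a ⊗ₜ w)))
      = lTensor A (H.T1.toLinearMap ∘ₗ (TensorProduct.mk k A A).flip w) D) :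
    α (rTensor A F (H.T4 (a ⊗ₜ c)))
      = lTensor A (H.T4.toLinearMap ∘ₗ (TensorProduct.mk k A A).flip c) D := by
  refine H.nondeg.ext_lTensor_lTensor_mulRight fun w => ?_
  have cover : lTensor A (mulLeft k c) ∘ₗ H.T1.toLinearMap ∘ₗ (TensorProduct.mk k A A).flip w
      = lTensor A (mulRight k w) ∘ₗ H.T4.toLinearMap ∘ₗ (TensorProduct.mk k A A).flip c :=
    LinearMap.ext fun v => (H.lTensor_mulRight_T4 w v c).symm
  rw [← assoc_lTensor, ← rTensor_lTensor_apply, lTensor_mulRight_T4, rTensor_lTensor_apply,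
    assoc_lTensor, hF, ← lTensor_comp_apply, ← lTensor_comp_apply, cover]

theorem coassoc_T2_T4 (x a c : A) :
    α (rTensor A (H.T2.toLinearMap ∘ₗ TensorProduct.mk k A A x) (H.T4 (a ⊗ₜ c)))
      = lTensor A (H.T4.toLinearMap ∘ₗ (TensorProduct.mk k A A).flip c) (H.T2 (x ⊗ₜ a)) :=
  H.assoc_rTensor_T4_of_T1 _ a c _ fun w => H.coassoc x a w

theorem coassoc_T3_T1 (b c w : A) :
    α (rTensor A (H.T3.toLinearMap ∘ₗ (TensorProduct.mk k A A).flip c) (H.T1 (b ⊗ₜ w)))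
      = lTensor A (H.T1.toLinearMap ∘ₗ (TensorProduct.mk k A A).flip w) (H.T3 (b ⊗ₜ c)) := by
  refine H.nondeg.ext_rTensor_mulLeft fun x => ?_
  have cover : rTensor A (mulLeft k x) ∘ₗ H.T3.toLinearMap ∘ₗ (TensorProduct.mk k A A).flip c
      = rTensor A (mulRight k c) ∘ₗ H.T2.toLinearMap ∘ₗ TensorProduct.mk k A A x :=
    LinearMap.ext fun v => H.rTensor_mulLeft_T3 x v c
  rw [← assoc_rTensor_rTensor, ← rTensor_comp_apply, cover,
    rTensor_comp_apply, assoc_rTensor_rTensor, H.coassoc,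
    rTensor_lTensor_apply, ← rTensor_mulLeft_T3, rTensor_lTensor_apply]

theorem coassoc_T3_T4 (a b c : A) :
    α (rTensor A (H.T3.toLinearMap ∘ₗ (TensorProduct.mk k A A).flip c) (H.T4 (b ⊗ₜ a)))
      = lTensor A (H.T4.toLinearMap ∘ₗ (TensorProduct.mk k A A).flip a) (H.T3 (b ⊗ₜ c)) :=
  H.assoc_rTensor_T4_of_T1 _ b a _ fun w => H.coassoc_T3_T1 b c w

end MHA

end Coassociativity

section AntipodeIdentity

variable {k}
variable {A : Type*} [NonUnitalRing A] [Module k A] [SMulCommClass k A A] [IsScalarTower k A A]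

namespace MHA

variable (H : MHA k A)

local notation "α" => TensorProduct.assoc k A A A

/-- In Sweedler notation: `a₍₁₎ ⊗ a₍₂₎ S(a₍₃₎) S(c) = a ⊗ S(c)`. -/
theorem T1_lTensor_S_T4 (a c : A) :
    H.T1 (lTensor A H.S.toLinearMap (H.T4 (a ⊗ₜ c))) = a ⊗ₜ H.S c := by
  refine H.nondeg.ext_rTensor_mulLeft fun x => ?_
  let ν : A ⊗[k] (A ⊗[k] A) →ₗ[k] A ⊗[k] A := lTensor A (mul' k A ∘ₗ lTensor A H.S.toLinearMap)
  have ν_assoc : ∀ (E : A ⊗[k] A) (q : A), ν (α (E ⊗ₜ q)) = lTensor A (mulRight k (H.S q)) E := by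
    intro E q
    induction E with
    | zero => simp
    | add _ _ h₁ h₂ => simp [add_tmul, h₁, h₂]
    | tmul u v => simp [ν]
  have cover : rTensor A (mulLeft k x) ∘ₗ H.T1.toLinearMap ∘ₗ lTensor A H.S.toLinearMap
      = ν ∘ₗ (TensorProduct.assoc k A A A).toLinearMap
          ∘ₗ rTensor A (H.T2.toLinearMap ∘ₗ TensorProduct.mk k A A x) := by
    refine TensorProduct.ext' fun p q => ?_
    simp only [LinearMap.comp_apply, lTensor_tmul, rTensor_tmul, LinearEquiv.coe_coe,
      TensorProduct.mk_apply]
    rw [rTensor_mulLeft_T1, ν_assoc]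
  have counit_S : mul' k A ∘ₗ lTensor A H.S.toLinearMap ∘ₗ H.T4.toLinearMap
      ∘ₗ (TensorProduct.mk k A A).flip c = H.counit.smulRight (H.S c) :=
    LinearMap.ext fun v => H.mul'_lTensor_S_T4 v c
  have smulRight_tmul : ∀ u : A ⊗[k] A,
      lTensor A (H.counit.smulRight (H.S c)) u = apT k A A H.counit u ⊗ₜ H.S c := by
    intro u
    induction u with
    | zero => simp
    | add _ _ h₁ h₂ => simp [add_tmul, h₁, h₂]
    | tmul u v => simp [smul_tmul']
  calc rTensor A (mulLeft k x) (H.T1 (lTensor A H.S.toLinearMap (H.T4 (a ⊗ₜ c))))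
      = ν (α (rTensor A (H.T2.toLinearMap ∘ₗ TensorProduct.mk k A A x) (H.T4 (a ⊗ₜ c)))) :=
        LinearMap.congr_fun cover _
    _ = lTensor A (H.counit.smulRight (H.S c)) (H.T2 (x ⊗ₜ a)) := by
        rw [coassoc_T2_T4, ← lTensor_comp_apply, ← counit_S]
        rfl
    _ = rTensor A (mulLeft k x) (a ⊗ₜ H.S c) := by
        rw [smulRight_tmul, H.hcounit2, rTensor_tmul, mulLeft_apply]

end MHA

end AntipodeIdentity

section CoOpposite

variable {k}
variable {A : Type*} [NonUnitalRing A] [Module k A] [SMulCommClass k A A] [IsScalarTower k A A]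

local notation "σ" => TensorProduct.comm k A A

theorem comm_mul_comm (u v : A ⊗[k] A) : σ (u * v) = σ u * σ v := by
  induction u with
  | zero => simp
  | add _ _ h₁ h₂ => simp [add_mul, h₁, h₂]
  | tmul a b =>
    induction v with
    | zero => simp
    | add _ _ h₁ h₂ => simp [mul_add, h₁, h₂]
    | tmul c d => simp [Algebra.TensorProduct.tmul_mul_tmul]

namespace Multiplier

def conjComm : Multiplier k (A ⊗[k] A) →ₗ[k] Multiplier k (A ⊗[k] A) where
  toFun m :=
    { U := (σ).toLinearMap ∘ₗ m.U ∘ₗ (σ).toLinearMap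
      V := (σ).toLinearMap ∘ₗ m.V ∘ₗ (σ).toLinearMap
      U_mul := fun a b => by simp [comm_mul_comm, m.U_mul]
      V_mul := fun a b => by simp [comm_mul_comm, m.V_mul]
      compat := fun a b => (σ).symm.injective <| by
        simp [comm_mul_comm, m.compat] }
  map_add' _ _ := by ext <;> simp
  map_smul' _ _ := by ext <;> simp

@[simp] theorem conjComm_U (m : Multiplier k (A ⊗[k] A)) (u : A ⊗[k] A) :
    (conjComm m).U u = σ (m.U (σ u)) := rfl

@[simp] theorem conjComm_V (m : Multiplier k (A ⊗[k] A)) (u : A ⊗[k] A) :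
    (conjComm m).V u = σ (m.V (σ u)) := rfl

theorem conjComm_mul (m n : Multiplier k (A ⊗[k] A)) :
    conjComm (m * n) = conjComm m * conjComm n := by
  ext <;> simp

theorem conjComm_incl (u : A ⊗[k] A) : conjComm (incl u) = incl (σ u) := by
  ext <;> simp [comm_mul_comm]

theorem conjComm_tOne (b : A) : conjComm (tOne k A A b) = oneT k A A b := by
  refine Multiplier.ext (LinearMap.ext fun u => ?_) (LinearMap.ext fun u => ?_)
  · show σ (rTensor A (mulLeft k b) (σ u)) = lTensor A (mulLeft k b) u
    rw [rTensor_comm, TensorProduct.comm_comm]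
  · show σ (rTensor A (mulRight k b) (σ u)) = lTensor A (mulRight k b) u
    rw [rTensor_comm, TensorProduct.comm_comm]

theorem conjComm_oneT (b : A) : conjComm (oneT k A A b) = tOne k A A b := by
  refine Multiplier.ext (LinearMap.ext fun u => ?_) (LinearMap.ext fun u => ?_)
  · show σ (lTensor A (mulLeft k b) (σ u)) = rTensor A (mulLeft k b) u
    rw [lTensor_comm, TensorProduct.comm_comm]
  · show σ (lTensor A (mulRight k b) (σ u)) = rTensor A (mulRight k b) u
    rw [lTensor_comm, TensorProduct.comm_comm]

end Multiplier

def reverseTensor : A ⊗[k] (A ⊗[k] A) →ₗ[k] A ⊗[k] (A ⊗[k] A) :=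
  lTensor A (σ).toLinearMap ∘ₗ (TensorProduct.assoc k A A A).toLinearMap
    ∘ₗ rTensor A (σ).toLinearMap ∘ₗ (TensorProduct.assoc k A A A).symm.toLinearMap
    ∘ₗ lTensor A (σ).toLinearMap

@[simp] theorem reverseTensor_tmul (p q r : A) :
    reverseTensor (p ⊗ₜ[k] (q ⊗ₜ[k] r)) = r ⊗ₜ[k] (q ⊗ₜ[k] p) := by
  simp [reverseTensor]

theorem assoc_rTensor_comm_comp (F : A →ₗ[k] A ⊗[k] A) (E : A ⊗[k] A) :
    TensorProduct.assoc k A A A (rTensor A ((σ).toLinearMap ∘ₗ F) (σ E))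
      = reverseTensor (lTensor A F E) := by
  have key : ∀ (G : A ⊗[k] A) (u : A),
      TensorProduct.assoc k A A A (σ G ⊗ₜ u) = reverseTensor (u ⊗ₜ G) := by
    intro G u
    induction G with
    | zero => simp
    | add _ _ h₁ h₂ => simp only [map_add, add_tmul, tmul_add, h₁, h₂]
    | tmul y z => simp
  induction E with
  | zero => simp
  | add _ _ h₁ h₂ => simp only [map_add, h₁, h₂]
  | tmul u v => exact key (F v) u

theorem lTensor_comm_comp_comm (G : A →ₗ[k] A ⊗[k] A) (E : A ⊗[k] A) :
    lTensor A ((σ).toLinearMap ∘ₗ G) (σ E)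
      = reverseTensor (TensorProduct.assoc k A A A (rTensor A G E)) := by
  have key : ∀ (F : A ⊗[k] A) (v : A),
      v ⊗ₜ σ F = reverseTensor (TensorProduct.assoc k A A A (F ⊗ₜ v)) := by
    intro F v
    induction F with
    | zero => simp
    | add _ _ h₁ h₂ => simp only [map_add, add_tmul, tmul_add, h₁, h₂]
    | tmul y z => simp
  induction E with
  | zero => simp
  | add _ _ h₁ h₂ => simp only [map_add, h₁, h₂]
  | tmul u v => exact key (G u) v

theorem mul'_rTensor_symm_comm (S : A ≃ₗ[k] A) (hS : ∀ a b, S (a * b) = S b * S a)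
    (E : A ⊗[k] A) :
    S (mul' k A (rTensor A S.symm.toLinearMap (σ E))) = mul' k A (rTensor A S.toLinearMap E) := by
  induction E with
  | zero => simp
  | add _ _ h₁ h₂ => simp only [map_add, h₁, h₂]
  | tmul u v => simp [hS]

theorem mul'_lTensor_symm_comm (S : A ≃ₗ[k] A) (hS : ∀ a b, S (a * b) = S b * S a)
    (E : A ⊗[k] A) :
    S (mul' k A (lTensor A S.symm.toLinearMap (σ E))) = mul' k A (lTensor A S.toLinearMap E) := by
  induction E with
  | zero => simp
  | add _ _ h₁ h₂ => simp only [map_add, h₁, h₂]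
  | tmul u v => simp [hS]

namespace MHA

variable (H : MHA k A)

def cop : MHA k A where
  nondeg := H.nondeg
  comul := Multiplier.conjComm ∘ₗ H.comul
  comul_mul a b := by simp [H.comul_mul, Multiplier.conjComm_mul]
  T1 := H.T3 ≪≫ₗ σ
  T2 := σ ≪≫ₗ H.T4 ≪≫ₗ σ
  T3 := H.T1 ≪≫ₗ σ
  T4 := σ ≪≫ₗ H.T2 ≪≫ₗ σ
  hT1 a b := by
    rw [LinearMap.comp_apply, ← Multiplier.conjComm_tOne, ← Multiplier.conjComm_mul, H.hT3,
      Multiplier.conjComm_incl]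
    rfl
  hT2 a b := by
    rw [LinearMap.comp_apply, ← Multiplier.conjComm_oneT, ← Multiplier.conjComm_mul, H.hT4,
      Multiplier.conjComm_incl]
    rfl
  hT3 a b := by
    rw [LinearMap.comp_apply, ← Multiplier.conjComm_oneT, ← Multiplier.conjComm_mul, H.hT1,
      Multiplier.conjComm_incl]
    rfl
  hT4 a b := by
    rw [LinearMap.comp_apply, ← Multiplier.conjComm_tOne, ← Multiplier.conjComm_mul, H.hT2,
      Multiplier.conjComm_incl]
    rfl
  coassoc a b c := by
    have h₁ : (σ ≪≫ₗ H.T4 ≪≫ₗ σ).toLinearMap ∘ₗ TensorProduct.mk k A A a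
        = (σ).toLinearMap ∘ₗ H.T4.toLinearMap ∘ₗ (TensorProduct.mk k A A).flip a :=
      LinearMap.ext fun _ => rfl
    have h₂ : (H.T3 ≪≫ₗ σ).toLinearMap ∘ₗ (TensorProduct.mk k A A).flip c
        = (σ).toLinearMap ∘ₗ H.T3.toLinearMap ∘ₗ (TensorProduct.mk k A A).flip c :=
      LinearMap.ext fun _ => rfl
    rw [h₁, h₂, LinearEquiv.trans_apply, assoc_rTensor_comm_comp, LinearEquiv.trans_apply,
      LinearEquiv.trans_apply, TensorProduct.comm_tmul, lTensor_comm_comp_comm, coassoc_T3_T4]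
  counit := H.counit
  counit_mul := H.counit_mul
  hcounit1 a b := by
    rw [LinearEquiv.trans_apply, apF_comm, apT_counit_T3]
  hcounit2 a b := by
    rw [LinearEquiv.trans_apply, LinearEquiv.trans_apply, TensorProduct.comm_tmul, ← apF_comm,
      TensorProduct.comm_comm, apF_counit_T4]
  S := H.S.symm
  S_antimul a b := H.S.injective <| by simp [H.S_antimul]
  hS1 a b := H.S.injective <| by
    rw [LinearEquiv.trans_apply, mul'_rTensor_symm_comm H.S H.S_antimul, mul'_rTensor_S_T3,
      map_smul]
  hS2 a b := H.S.injective <| by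
    rw [LinearEquiv.trans_apply, LinearEquiv.trans_apply, TensorProduct.comm_tmul,
      mul'_lTensor_symm_comm H.S H.S_antimul, mul'_lTensor_S_T4, map_smul]

/-- In Sweedler notation: `a₍₂₎ S⁻¹(a₍₁₎) b ⊗ a₍₃₎ = b ⊗ a`. -/
theorem T3_lTensor_Sinv_comm_T2 (b a : A) :
    H.T3 (lTensor A H.S.symm.toLinearMap (σ (H.T2 (H.S b ⊗ₜ a)))) = b ⊗ₜ a := by
  have h := congrArg σ (H.cop.T1_lTensor_S_T4 a (H.S b))
  simpa [cop] using h

end MHA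

end CoOpposite

section LocalUnits

section Ring

variable {A : Type*} [NonUnitalRing A]

theorem exists_left_unit_list (h : ∀ a : A, ∃ e, e * a = a) (l : List A) :
    ∃ e : A, ∀ a ∈ l, e * a = a := by
  induction l with
  | nil => exact ⟨0, by simp⟩
  | cons a l ih =>
    obtain ⟨e₁, he₁⟩ := ih
    obtain ⟨e₂, he₂⟩ := h (a - e₁ * a)
    refine ⟨e₁ + e₂ - e₂ * e₁, fun b hb => ?_⟩
    rcases List.mem_cons.mp hb with rfl | hb
    · rw [mul_sub, sub_eq_iff_eq_add] at he₂
      rw [sub_mul, add_mul, mul_assoc, sub_eq_iff_eq_add, he₂]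
      abel
    · rw [sub_mul, add_mul, mul_assoc, he₁ b hb]
      abel

theorem exists_right_unit_list (h : ∀ a : A, ∃ e, a * e = a) (l : List A) :
    ∃ e : A, ∀ a ∈ l, a * e = a := by
  obtain ⟨e, he⟩ := exists_left_unit_list (A := Aᵐᵒᵖ)
    (fun a => let ⟨e, he⟩ := h a.unop; ⟨.op e, MulOpposite.unop_injective he⟩) (l.map .op)
  exact ⟨e.unop, fun a ha => MulOpposite.op_injective (he _ (List.mem_map_of_mem ha))⟩

theorem exists_local_unit (hl : ∀ a : A, ∃ e, e * a = a) (hr : ∀ a : A, ∃ e, a * e = a)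
    (l₁ l₂ : List A) :
    ∃ b : A, (∀ a ∈ l₁, a * b = a ∧ b * a = a) ∧ ∀ a ∈ l₂, b * a = a := by
  obtain ⟨e, he⟩ := exists_left_unit_list hl (l₁ ++ l₂)
  obtain ⟨f, hf⟩ := exists_right_unit_list hr l₁
  have left_unit : ∀ a, e * a = a → (e + f - f * e) * a = a := fun a ha => by
    rw [sub_mul, add_mul, mul_assoc, ha]
    abel
  refine ⟨e + f - f * e, fun a ha => ⟨?_, left_unit a (he a (List.mem_append_left _ ha))⟩,
    fun a ha => left_unit a (he a (List.mem_append_right _ ha))⟩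
  rw [mul_sub, mul_add, ← mul_assoc, hf a ha]
  abel

end Ring

variable {k}
variable {A : Type*} [NonUnitalRing A] [Module k A] [SMulCommClass k A A] [IsScalarTower k A A]

namespace MHA

/- For `a ≠ 0`: every `(x ⊗ 1) T1⁻¹(a ⊗ a)` lies in `A ⊗ Aa`, hence so does `T1⁻¹(a ⊗ a)` by
nondegeneracy; applying `T1` (which commutes with right multiplication in the second leg) and a
functional `g` with `g a = 1` to the first leg gives `a = e a`. -/
theorem exists_mul_left_eq_self (H : MHA k A) (a : A) : ∃ e : A, e * a = a := by
  rcases eq_or_ne a 0 with rfl | ha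
  · exact ⟨0, mul_zero 0⟩
  set u := H.T1.symm (a ⊗ₜ a)
  have T1_lTensor : ∀ z, H.T1 (lTensor A (mulRight k a) z) = lTensor A (mulRight k a) (H.T1 z) :=
    LinearMap.congr_fun (H.T1_comp_lTensor_mulRight a)
  have covered : ∀ x : A, rTensor A (mulLeft k x) u ∈ range (lTensor A (mulRight k a)) := by
    intro x
    refine ⟨H.T1.symm (H.T3 (x ⊗ₜ a)), H.T1.injective ?_⟩
    rw [T1_lTensor, LinearEquiv.apply_symm_apply, ← comul_U_tmul, ← LinearEquiv.coe_coe,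
      ← LinearMap.comp_apply, T1_comp_rTensor_mulLeft, LinearMap.comp_apply,
      LinearEquiv.coe_coe, LinearEquiv.apply_symm_apply]
  obtain ⟨w, hw⟩ :=
    mem_range_lTensor_of_forall_rTensor (fun x : A => mulLeft k x) H.nondeg.2 (mulRight k a) covered
  obtain ⟨g, hg⟩ := Module.Projective.exists_dual_eq_one k ha
  refine ⟨apF k A g (H.T1 w), ?_⟩
  have split : a ⊗ₜ a = lTensor A (mulRight k a) (H.T1 w) := by
    rw [← T1_lTensor, hw, LinearEquiv.apply_symm_apply]
  have key := congrArg (apF k A g) split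
  rw [apF_tmul, hg, one_smul, apF_lTensor, mulRight_apply] at key
  exact key.symm

theorem exists_mul_right_eq_self (H : MHA k A) (a : A) : ∃ e : A, a * e = a := by
  rcases eq_or_ne a 0 with rfl | ha
  · exact ⟨0, zero_mul 0⟩
  set u := H.T2.symm (a ⊗ₜ a)
  have T2_rTensor : ∀ z, H.T2 (rTensor A (mulLeft k a) z) = rTensor A (mulLeft k a) (H.T2 z) :=
    LinearMap.congr_fun (H.T2_comp_rTensor_mulLeft a)
  have covered : ∀ x : A, lTensor A (mulRight k x) u ∈ range (rTensor A (mulLeft k a)) := by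
    intro x
    refine ⟨H.T2.symm (H.T4 (x ⊗ₜ a)), H.T2.injective ?_⟩
    rw [T2_rTensor, LinearEquiv.apply_symm_apply, ← comul_V_tmul, ← LinearEquiv.coe_coe,
      ← LinearMap.comp_apply, T2_comp_lTensor_mulRight, LinearMap.comp_apply,
      LinearEquiv.coe_coe, LinearEquiv.apply_symm_apply]
  obtain ⟨w, hw⟩ :=
    mem_range_rTensor_of_forall_lTensor (fun x : A => mulRight k x) H.nondeg.1 (mulLeft k a) covered
  obtain ⟨g, hg⟩ := Module.Projective.exists_dual_eq_one k ha
  refine ⟨apT k A A g (H.T2 w), ?_⟩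
  have split : a ⊗ₜ a = rTensor A (mulLeft k a) (H.T2 w) := by
    rw [← T2_rTensor, hw, LinearEquiv.apply_symm_apply]
  have key := congrArg (apT k A A g) split
  rw [apT_tmul, hg, one_smul, apT_rTensor, mulLeft_apply] at key
  exact key.symm

theorem exists_local_unit (H : MHA k A) (l₁ l₂ : List A) :
    ∃ b : A, (∀ a ∈ l₁, a * b = a ∧ b * a = a) ∧ ∀ a ∈ l₂, b * a = a :=
  _root_.exists_local_unit H.exists_mul_left_eq_self H.exists_mul_right_eq_self l₁ l₂

end MHA

end LocalUnits

section ModuleAlgebra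

variable {k}

theorem sum_map_tmul_eq_psum {M N P : Type*} [AddCommGroup M] [Module k M] [AddCommGroup N]
    [Module k N] [AddCommGroup P] [Module k P] (G : M ⊗[k] N →ₗ[k] P) (l : List (M × N)) :
    (l.map fun p => G (p.1 ⊗ₜ p.2)).sum = G (psum k l) := by
  rw [psum, map_list_sum, List.map_map]
  rfl

theorem exists_psum_eq {M N : Type*} [AddCommGroup M] [Module k M] [AddCommGroup N] [Module k N]
    (u : M ⊗[k] N) : ∃ l : List (M × N), psum k l = u := by
  induction u with
  | zero => exact ⟨[], rfl⟩
  | tmul m n => exact ⟨[(m, n)], by simp [psum]⟩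
  | add u v hu hv =>
    obtain ⟨lu, rfl⟩ := hu
    obtain ⟨lv, rfl⟩ := hv
    exact ⟨lu ++ lv, by simp [psum]⟩

variable {A : Type*} [NonUnitalRing A] [Module k A] [SMulCommClass k A A] [IsScalarTower k A A]
variable {R : Type*} [NonUnitalRing R] [Module k R] [SMulCommClass k R R] [IsScalarTower k R R]
variable {H : MHA k A} {act : A →ₗ[k] R →ₗ[k] R}

def actMul (act : A →ₗ[k] R →ₗ[k] R) (x y : R) : A ⊗[k] A →ₗ[k] R :=
  mul' k R ∘ₗ map (act.flip x) (act.flip y)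

@[simp] theorem actMul_tmul (x y : R) (p q : A) :
    actMul act x y (p ⊗ₜ q) = act p x * act q y := rfl

theorem sum_map_mul_eq_actMul (x y : R) (l : List (A × A)) :
    (l.map fun p => act p.1 x * act p.2 y).sum = actMul act x y (psum k l) :=
  sum_map_tmul_eq_psum (actMul act x y) l

namespace IsModAlg

theorem mem_span_act (h : IsModAlg H R act) (r : R) :
    r ∈ Submodule.span k {z : R | ∃ (a : A) (x : R), z = act a x} :=
  h.unital ▸ Submodule.mem_top

theorem act_mul_act (h : IsModAlg H R act) (a b : A) (x y : R) :
    act a (x * act b y) = actMul act x y (H.T1 (a ⊗ₜ b)) := by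
  obtain ⟨l, hl⟩ := exists_psum_eq (H.T1 (a ⊗ₜ b))
  rw [h.mul_cond a b x y l hl, sum_map_mul_eq_actMul, hl]

theorem actMul_act_left (h : IsModAlg H R act) (b : A) (x y : R) :
    actMul act (act b x) y = actMul act x y ∘ₗ rTensor A (mulRight k b) :=
  TensorProduct.ext' fun p q => by simp [h.assoc]

theorem actMul_act_right (h : IsModAlg H R act) (c : A) (x w : R) :
    actMul act x (act c w) = actMul act x w ∘ₗ lTensor A (mulRight k c) :=
  TensorProduct.ext' fun p q => by simp [h.assoc]

/- The module-algebra law only covers `Δ(a)` by `1 ⊗ b`; for `y = c ▷ w` (unitality) the cover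
`Δ(a)(b ⊗ c)` can be split either as `(Δ(a)(1 ⊗ c))(b ⊗ 1)` or as `(Δ(a)(b ⊗ 1))(1 ⊗ c)`. -/
theorem act_act_mul (h : IsModAlg H R act) (a b : A) (x y : R) :
    act a (act b x * y) = actMul act x y (H.T3 (a ⊗ₜ b)) := by
  induction h.mem_span_act y using Submodule.span_induction with
  | mem z hz =>
    obtain ⟨c, w, rfl⟩ := hz
    rw [h.act_mul_act, h.actMul_act_left, LinearMap.comp_apply, H.rTensor_mulRight_T1,
      ← LinearMap.comp_apply, ← h.actMul_act_right]
  | zero => simp [actMul]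
  | add y₁ y₂ _ _ hy₁ hy₂ =>
    simp only [actMul, LinearMap.comp_apply] at *
    rw [mul_add, map_add, hy₁, hy₂, map_add act.flip, map_add_right, LinearMap.add_apply, map_add]
  | smul c y _ hy =>
    simp only [actMul, LinearMap.comp_apply] at *
    rw [mul_smul_comm, map_smul, hy, map_smul act.flip, map_smul_right, LinearMap.smul_apply,
      map_smul]

theorem exists_left_units (h : IsModAlg H R act) (r : R) :
    ∃ l : List A, ∀ b : A, (∀ a ∈ l, b * a = a) → act b r = r := by
  induction h.mem_span_act r using Submodule.span_induction with
  | mem z hz =>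
    obtain ⟨a, x, rfl⟩ := hz
    exact ⟨[a], fun b hb => by rw [h.assoc, hb a (List.mem_singleton_self a)]⟩
  | zero => exact ⟨[], fun b _ => map_zero _⟩
  | add y z _ _ hy hz =>
    obtain ⟨l₁, h₁⟩ := hy
    obtain ⟨l₂, h₂⟩ := hz
    refine ⟨l₁ ++ l₂, fun b hb => ?_⟩
    rw [map_add, h₁ b fun a ha => hb a (List.mem_append_left _ ha),
      h₂ b fun a ha => hb a (List.mem_append_right _ ha)]
  | smul c y _ hy =>
    obtain ⟨l, hl⟩ := hy
    exact ⟨l, fun b hb => by rw [map_smul, hl b hb]⟩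

theorem exists_local_unit (h : IsModAlg H R act) (la : List A) (lr : List R) :
    ∃ b : A, (∀ a ∈ la, a * b = a ∧ b * a = a) ∧ ∀ r ∈ lr, act b r = r := by
  choose units h_units using h.exists_left_units
  obtain ⟨b, hb, hb'⟩ := H.exists_local_unit la (lr.flatMap units)
  exact ⟨b, hb, fun r hr => h_units r b fun a ha => hb' a (List.mem_flatMap.mpr ⟨r, hr, ha⟩)⟩

end IsModAlg

end ModuleAlgebra

section Statements
variable {k}
variable {A : Type*} [NonUnitalRing A] [Module k A] [SMulCommClass k A A] [IsScalarTower k A A]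
variable {R : Type*} [NonUnitalRing R] [Module k R] [SMulCommClass k R R] [IsScalarTower k R R]

/-- The induced partial action `a · x := 1_L (a ▷ x)` on a right ideal `L` with
identity element `e = 1_L`. -/
def inducedAct (act : A →ₗ[k] R →ₗ[k] R) (L : NonUnitalSubalgebra k R)
    (hIdeal : ∀ x ∈ L, ∀ r : R, x * r ∈ L) (e : R) (he : e ∈ L) :
    A →ₗ[k] ↥L →ₗ[k] ↥L :=
  LinearMap.mk₂ k (fun a x => (⟨e * act a (x : R), hIdeal e he _⟩ : ↥L))
    (fun a b x => Subtype.ext <| by simp [mul_add])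
    (fun c a x => Subtype.ext <| by simp [mul_smul_comm])
    (fun a x y => Subtype.ext <| by simp [mul_add])
    (fun c a x => Subtype.ext <| by simp [mul_smul_comm])

section InducedAction

variable {H : MHA k A} {act : A →ₗ[k] R →ₗ[k] R} {L : NonUnitalSubalgebra k R}
  {hIdeal : ∀ x ∈ L, ∀ r : R, x * r ∈ L} {e : R} {he : e ∈ L}

@[simp] theorem coe_inducedAct (a : A) (x : ↥L) :
    (inducedAct act L hIdeal e he a x : R) = e * act a x := rfl

theorem coe_inducedAct_mul_inducedAct (hunit : ∀ x ∈ L, e * x = x ∧ x * e = x)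
    (p q : A) (x y : ↥L) :
    ((inducedAct act L hIdeal e he p x * inducedAct act L hIdeal e he q y : ↥L) : R)
      = e * actMul act x y (p ⊗ₜ q) := by
  simp only [MulMemClass.coe_mul, coe_inducedAct, actMul_tmul]
  rw [← mul_assoc, (hunit _ (hIdeal e he _)).2, mul_assoc]

theorem coe_sum_inducedAct_mul (hunit : ∀ x ∈ L, e * x = x ∧ x * e = x)
    (x y : ↥L) (l : List (A × A)) :
    (((l.map fun p => inducedAct act L hIdeal e he p.1 x * inducedAct act L hIdeal e he p.2 y).sum
      : ↥L) : R) = e * actMul act x y (psum k l) := by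
  rw [AddSubmonoidClass.coe_list_sum, List.map_map, ← sum_map_tmul_eq_psum, ← List.sum_map_mul_left]
  exact congrArg List.sum (List.map_congr_left fun p _ =>
    coe_inducedAct_mul_inducedAct hunit p.1 p.2 x y)

theorem inducedAct_eq_self (hunit : ∀ x ∈ L, e * x = x ∧ x * e = x) {b : A} {x : ↥L}
    (hb : act b x = x) : inducedAct act L hIdeal e he b x = x :=
  Subtype.ext <| by rw [coe_inducedAct, hb, (hunit x x.2).1]

theorem exists_inducedAct_eq_self (hunit : ∀ x ∈ L, e * x = x ∧ x * e = x)
    (h : IsModAlg H R act) (x : ↥L) : ∃ b : A, inducedAct act L hIdeal e he b x = x := by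
  obtain ⟨b, -, hb⟩ := h.exists_local_unit [] [(x : R)]
  exact ⟨b, inducedAct_eq_self hunit (hb x (List.mem_singleton_self _))⟩

theorem mem_span_inducedAct (hunit : ∀ x ∈ L, e * x = x ∧ x * e = x) (h : IsModAlg H R act)
    (x : ↥L) :
    x ∈ Submodule.span k {z : ↥L | ∃ (b : A) (y : ↥L), z = inducedAct act L hIdeal e he b y} :=
  let ⟨b, hb⟩ := exists_inducedAct_eq_self hunit h x
  Submodule.subset_span ⟨b, x, hb.symm⟩

theorem coe_inducedAct_inducedAct (h : IsModAlg H R act) (p q : A) (x : ↥L) :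
    (inducedAct act L hIdeal e he p (inducedAct act L hIdeal e he q x) : R)
      = e * actMul act e x (H.T1 (p ⊗ₜ q)) := by
  rw [coe_inducedAct, coe_inducedAct, h.act_mul_act]

theorem inducedAct_cond1 (hunit : ∀ x ∈ L, e * x = x ∧ x * e = x) (h : IsModAlg H R act)
    (a b : A) (x y : ↥L) (l : List (A × A)) (hl : psum k l = H.T1 (a ⊗ₜ b)) :
    inducedAct act L hIdeal e he a (x * inducedAct act L hIdeal e he b y)
      = (l.map fun p =>
          inducedAct act L hIdeal e he p.1 x * inducedAct act L hIdeal e he p.2 y).sum := by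
  apply Subtype.ext
  rw [coe_sum_inducedAct_mul hunit, hl, ← h.act_mul_act, coe_inducedAct, MulMemClass.coe_mul,
    coe_inducedAct, ← mul_assoc, (hunit x x.2).2]

theorem inducedAct_cond2a (hunit : ∀ x ∈ L, e * x = x ∧ x * e = x) (h : IsModAlg H R act)
    (a b : A) (x : ↥L) (l : List (A × A)) (hl : psum k l = H.T4 (a ⊗ₜ H.S.symm b)) :
    ((Multiplier.inclL ∘ₗ (inducedAct act L hIdeal e he).flip ⟨e, he⟩) a).U
        (inducedAct act L hIdeal e he b x)
      = (l.map fun p => inducedAct act L hIdeal e he p.1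
          (inducedAct act L hIdeal e he (H.S p.2) x)).sum := by
  apply Subtype.ext
  let G := mulLeft k e ∘ₗ actMul act e x ∘ₗ H.T1.toLinearMap ∘ₗ lTensor A H.S.toLinearMap
  calc _ = e * actMul act e x (a ⊗ₜ b) := coe_inducedAct_mul_inducedAct hunit a b ⟨e, he⟩ x
    _ = G (psum k l) := by
        simp [G, hl, MHA.T1_lTensor_S_T4]
    _ = _ := by
        rw [← sum_map_tmul_eq_psum, AddSubmonoidClass.coe_list_sum, List.map_map]
        exact congrArg List.sum (List.map_congr_left fun p _ =>
          (coe_inducedAct_inducedAct h p.1 (H.S p.2) x).symm)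

theorem inducedAct_cond3 (hunit : ∀ x ∈ L, e * x = x ∧ x * e = x) (h : IsModAlg H R act)
    (la : List A) (lx : List ↥L) :
    ∃ b : A, (∀ a ∈ la, a * b = a ∧ b * a = a) ∧ ∀ a ∈ la, ∀ x ∈ lx,
      inducedAct act L hIdeal e he a x
        = inducedAct act L hIdeal e he a (inducedAct act L hIdeal e he b x) := by
  obtain ⟨b, hb, hbx⟩ := h.exists_local_unit la (lx.map Subtype.val)
  refine ⟨b, hb, fun a _ x hx => ?_⟩
  rw [inducedAct_eq_self hunit (hbx x (List.mem_map_of_mem hx))]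

theorem inducedAct_cond4 (hunit : ∀ x ∈ L, e * x = x ∧ x * e = x) (h : IsModAlg H R act)
    (x : ↥L) (hx : ∀ a : A, inducedAct act L hIdeal e he a x = 0) : x = 0 :=
  let ⟨b, hb⟩ := exists_inducedAct_eq_self hunit h x
  hb ▸ hx b

theorem commute_of_two_sided (hIdeal : ∀ x ∈ L, ∀ r : R, x * r ∈ L)
    (hLeftIdeal : ∀ x ∈ L, ∀ r : R, r * x ∈ L) (he : e ∈ L)
    (hunit : ∀ x ∈ L, e * x = x ∧ x * e = x) (r : R) : e * r = r * e :=
  calc e * r = e * r * e := ((hunit _ (hIdeal e he r)).2).symm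
    _ = e * (r * e) := mul_assoc e r e
    _ = r * e := (hunit _ (hLeftIdeal e he r)).1

theorem inducedAct_cond5 (hunit : ∀ x ∈ L, e * x = x ∧ x * e = x) (h : IsModAlg H R act)
    (hcomm : ∀ r : R, e * r = r * e)
    (a b : A) (x y : ↥L) (l : List (A × A)) (hl : psum k l = H.T3 (a ⊗ₜ b)) :
    inducedAct act L hIdeal e he a (inducedAct act L hIdeal e he b x * y)
      = (l.map fun p =>
          inducedAct act L hIdeal e he p.1 x * inducedAct act L hIdeal e he p.2 y).sum := by
  apply Subtype.ext
  rw [coe_sum_inducedAct_mul hunit, hl, ← h.act_act_mul, coe_inducedAct, MulMemClass.coe_mul,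
    coe_inducedAct, hcomm (act b x), mul_assoc, (hunit y y.2).1]

theorem inducedAct_cond6 (hunit : ∀ x ∈ L, e * x = x ∧ x * e = x) (h : IsModAlg H R act)
    (hcomm : ∀ r : R, e * r = r * e)
    (a b : A) (x : ↥L) (l : List (A × A)) (hl : psum k l = H.T2 (H.S b ⊗ₜ a)) :
    ((Multiplier.inclL ∘ₗ (inducedAct act L hIdeal e he).flip ⟨e, he⟩) a).V
        (inducedAct act L hIdeal e he b x)
      = (l.map fun p => inducedAct act L hIdeal e he p.2
          (inducedAct act L hIdeal e he (H.S.symm p.1) x)).sum := by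
  apply Subtype.ext
  have T1_eq_T3 : ∀ u, actMul act e x (H.T1 u) = actMul act x e (H.T3 u) :=
    LinearMap.congr_fun (f := actMul act e x ∘ₗ H.T1.toLinearMap)
      (g := actMul act x e ∘ₗ H.T3.toLinearMap) <| TensorProduct.ext' fun u w => by
        simp only [LinearMap.comp_apply, LinearEquiv.coe_coe]
        rw [← h.act_mul_act, hcomm, h.act_act_mul]
  let G := mulLeft k e ∘ₗ actMul act e x ∘ₗ H.T1.toLinearMap ∘ₗ lTensor A H.S.symm.toLinearMap
    ∘ₗ (TensorProduct.comm k A A).toLinearMap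
  calc _ = e * actMul act x e (b ⊗ₜ a) := coe_inducedAct_mul_inducedAct hunit b a x ⟨e, he⟩
    _ = G (psum k l) := by
        simp only [G, LinearMap.comp_apply, LinearEquiv.coe_coe, mulLeft_apply, hl, T1_eq_T3,
          MHA.T3_lTensor_Sinv_comm_T2]
    _ = _ := by
        rw [← sum_map_tmul_eq_psum, AddSubmonoidClass.coe_list_sum, List.map_map]
        exact congrArg List.sum (List.map_congr_left fun p _ =>
          (coe_inducedAct_inducedAct h p.2 (H.S.symm p.1) x).symm)

end InducedAction

theorem induced_partial_action_general
    (H : MHA k A)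
    (act : A →ₗ[k] R →ₗ[k] R) (h : IsModAlg H R act)
    (L : NonUnitalSubalgebra k R)
    (hIdeal : ∀ x ∈ L, ∀ r : R, x * r ∈ L)
    (e : R) (he : e ∈ L) (hidem : ∀ x ∈ L, e * x = x ∧ x * e = x) :
    IsPModAlg H ↥L (inducedAct act L hIdeal e he)
        (Multiplier.inclL ∘ₗ ((inducedAct act L hIdeal e he).flip ⟨e, he⟩))
    ∧ ((∀ x ∈ L, ∀ r : R, r * x ∈ L) →
        IsSymPModAlg H ↥L (inducedAct act L hIdeal e he)
          (Multiplier.inclL ∘ₗ ((inducedAct act L hIdeal e he).flip ⟨e, he⟩))) := by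
  have partial_action : IsPModAlg H ↥L (inducedAct act L hIdeal e he)
      (Multiplier.inclL ∘ₗ ((inducedAct act L hIdeal e he).flip ⟨e, he⟩)) :=
    { cond1 := inducedAct_cond1 hidem h
      cond2a := inducedAct_cond2a hidem h
      cond2b := fun _ _ => mem_span_inducedAct hidem h _
      cond3 := inducedAct_cond3 hidem h
      cond4 := inducedAct_cond4 hidem h }
  refine ⟨partial_action, fun hLeftIdeal => ?_⟩
  have hcomm := commute_of_two_sided hIdeal hLeftIdeal he hidem
  exact
    { toIsPModAlg := partial_action
      cond5 := inducedAct_cond5 hidem h hcomm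
      cond6 := inducedAct_cond6 hidem h hcomm
      cond7 := fun _ _ => mem_span_inducedAct hidem h _ }

/-- **Proposition 4.10 (Induced partial actions).**  Let `A` be a regular multiplier
Hopf algebra, `R` a unitary left `A`-module algebra via `▷`, and `L ⊆ R` a right ideal
of `R` with identity element `1_L = e`.  Then `(L, ·, 𝔢)` is a partial `A`-module
algebra, where `a · x = 1_L(a ▷ x)` and `𝔢(a) = a · 1_L`; if `L` is a two-sided ideal,
the induced partial action is symmetric. -/
theorem induced_partial_action
    (H : MHA k A) (hR : NondegProd R)
    (act : A →ₗ[k] R →ₗ[k] R) (h : IsModAlg H R act)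
    (L : NonUnitalSubalgebra k R) (hL : NondegProd ↥L)
    (hIdeal : ∀ x ∈ L, ∀ r : R, x * r ∈ L)
    (e : R) (he : e ∈ L) (hidem : ∀ x ∈ L, e * x = x ∧ x * e = x) :
    IsPModAlg H ↥L (inducedAct act L hIdeal e he)
        (Multiplier.inclL ∘ₗ ((inducedAct act L hIdeal e he).flip ⟨e, he⟩))
    ∧ ((∀ x ∈ L, ∀ r : R, r * x ∈ L) →
        IsSymPModAlg H ↥L (inducedAct act L hIdeal e he)
          (Multiplier.inclL ∘ₗ ((inducedAct act L hIdeal e he).flip ⟨e, he⟩))) :=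
  induced_partial_action_general H act h L hIdeal e he hidem

end Statements
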